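/- (Slack-based perturbation robustness.) Let C be an affine feedback policy with x̄₀ = μ₀′, and let (μ_k′, Σ_k) be the trajectory propagated by C from a moment pair (μ₀′, Σ₀). Suppose: (i) there is δ_c > 0 with (a_i^x)ᵀ μ_k′ + c·√((a_i^x)ᵀ Σ_k a_i^x) + δ_c ≤ b_i^x for all i and all 0 ≤ k ≤ T; (ii) there is δ_f > 0 with c·√(λ_max(Σ_T)) + δ_f ≤ r_G; (iii) μ_T′ = μ_G; and (iv) δ₀ > 0 satisfies ‖a_i^x‖₂ · ‖𝒜_{0,k−1}‖ · δ₀ ≤ δ_c for all i and all 0 ≤ k ≤ T, and ‖𝒜_{0,T−1}‖ · δ₀ ≤ δ_f. Then for every μ₀ with ‖μ₀ − μ₀′‖₂ ≤ δ₀, the trajectory (μ_k, Σ_k) propagated by C from (μ₀, Σ₀) satisfies (a_i^x)ᵀ μ_k + c·√((a_i^x)ᵀ Σ_k a_i^x) ≤ b_i^x for all i and all 0 ≤ k ≤ T, and its terminal pair satisfies ‖μ_T − μ_G‖₂ + c·√(λ_max(Σ_T)) ≤ r_G. -/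

import Mathlib

open Matrix

noncomputable def eucNorm {n : ℕ} (v : Fin n → ℝ) : ℝ := Real.sqrt (∑ i, v i ^ 2)

noncomputable def lamMax {n : ℕ} (M : Matrix (Fin n) (Fin n) ℝ) : ℝ :=
  sSup {r : ℝ | ∃ v : Fin n → ℝ, eucNorm v = 1 ∧ r = v ⬝ᵥ M.mulVec v}

noncomputable def lamMin {n : ℕ} (M : Matrix (Fin n) (Fin n) ℝ) : ℝ :=
  sInf {r : ℝ | ∃ v : Fin n → ℝ, eucNorm v = 1 ∧ r = v ⬝ᵥ M.mulVec v}

noncomputable def specNorm {n p : ℕ} (M : Matrix (Fin n) (Fin p) ℝ) : ℝ :=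
  Real.sqrt (lamMax (Mᵀ * M))

structure Policy (n m T : ℕ) (A : Matrix (Fin n) (Fin n) ℝ) (B : Matrix (Fin n) (Fin m) ℝ) where
  xbar : ℕ → Fin n → ℝ
  ubar : ℕ → Fin m → ℝ
  K : ℕ → Matrix (Fin m) (Fin n) ℝ
  xbar_dyn : ∀ k, k < T → xbar (k + 1) = A.mulVec (xbar k) + B.mulVec (ubar k)

namespace Policy

variable {n m T : ℕ} {A : Matrix (Fin n) (Fin n) ℝ} {B : Matrix (Fin n) (Fin m) ℝ}

noncomputable def mean (C : Policy n m T A B) (mu0 : Fin n → ℝ) : ℕ → Fin n → ℝ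
  | 0 => mu0
  | k + 1 => A.mulVec (C.mean mu0 k) + B.mulVec (C.ubar k)
      + B.mulVec ((C.K k).mulVec (C.mean mu0 k - C.xbar k))

noncomputable def cov (C : Policy n m T A B) (D : Matrix (Fin n) (Fin n) ℝ)
    (Sig0 : Matrix (Fin n) (Fin n) ℝ) : ℕ → Matrix (Fin n) (Fin n) ℝ
  | 0 => Sig0
  | k + 1 => (A + B * C.K k) * C.cov D Sig0 k * (A + B * C.K k)ᵀ + D * Dᵀ

noncomputable def clProd (C : Policy n m T A B) : ℕ → Matrix (Fin n) (Fin n) ℝ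
  | 0 => 1
  | k + 1 => (A + B * C.K k) * C.clProd k

end Policy

def stateOK {n m T : ℕ} {A : Matrix (Fin n) (Fin n) ℝ} {B : Matrix (Fin n) (Fin m) ℝ}
    (c : ℝ) {I : ℕ} (ax : Fin I → Fin n → ℝ) (bx : Fin I → ℝ)
    (D : Matrix (Fin n) (Fin n) ℝ) (C : Policy n m T A B)
    (mu0 : Fin n → ℝ) (Sig0 : Matrix (Fin n) (Fin n) ℝ) : Prop :=
  ∀ i : Fin I, ∀ k ≤ T,
    ax i ⬝ᵥ C.mean mu0 k + c * Real.sqrt (ax i ⬝ᵥ (C.cov D Sig0 k).mulVec (ax i)) ≤ bx i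

def ctrlOK {n m T : ℕ} {A : Matrix (Fin n) (Fin n) ℝ} {B : Matrix (Fin n) (Fin m) ℝ}
    (c : ℝ) {J : ℕ} (au : Fin J → Fin m → ℝ) (bu : Fin J → ℝ)
    (D : Matrix (Fin n) (Fin n) ℝ) (C : Policy n m T A B)
    (mu0 : Fin n → ℝ) (Sig0 : Matrix (Fin n) (Fin n) ℝ) : Prop :=
  ∀ j : Fin J, ∀ k < T,
    au j ⬝ᵥ (C.ubar k + (C.K k).mulVec (C.mean mu0 k - C.xbar k))
      + c * Real.sqrt (au j ⬝ᵥ (C.K k * C.cov D Sig0 k * (C.K k)ᵀ).mulVec (au j)) ≤ bu j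

def inBall {n : ℕ} (c : ℝ) (muHat : Fin n → ℝ) (rHat : ℝ)
    (mu : Fin n → ℝ) (Sig : Matrix (Fin n) (Fin n) ℝ) : Prop :=
  eucNorm (mu - muHat) + c * Real.sqrt (lamMax Sig) ≤ rHat

def BRS {n m : ℕ} (T : ℕ) (A : Matrix (Fin n) (Fin n) ℝ) (B : Matrix (Fin n) (Fin m) ℝ)
    (D : Matrix (Fin n) (Fin n) ℝ) (c : ℝ) {I J : ℕ}
    (ax : Fin I → Fin n → ℝ) (bx : Fin I → ℝ) (au : Fin J → Fin m → ℝ) (bu : Fin J → ℝ)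
    (S : Set ((Fin n → ℝ) × Matrix (Fin n) (Fin n) ℝ)) :
    Set ((Fin n → ℝ) × Matrix (Fin n) (Fin n) ℝ) :=
  {p | p.2.PosSemidef ∧ ∃ C : Policy n m T A B, C.xbar 0 = p.1 ∧
    stateOK c ax bx D C p.1 p.2 ∧ ctrlOK c au bu D C p.1 p.2 ∧
    (C.mean p.1 T, C.cov D p.2 T) ∈ S}

def Proj {n : ℕ} (S : Set ((Fin n → ℝ) × Matrix (Fin n) (Fin n) ℝ)) : Set (Fin n → ℝ) :=
  {mu | ∃ Sig, (mu, Sig) ∈ S}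

/-! The covariance recursion does not involve the mean, and the mean error evolves linearly:
`μ_k - μ_k' = 𝒜_{0,k-1} (μ₀ - μ₀')` (here `C.clProd k`). By Cauchy–Schwarz and the bound
`‖M v‖ ≤ √λ_max(MᵀM) ‖v‖`, the constraint function `a_iᵀ μ_k` moves by at most
`‖a_i‖ ‖𝒜_{0,k-1}‖ δ₀ ≤ δ_c` and the terminal mean by at most `‖𝒜_{0,T-1}‖ δ₀ ≤ δ_f`,
which the slacks absorb. -/

section EuclideanNorm

variable {n : ℕ}

lemma eucNorm_eq_norm (v : Fin n → ℝ) : eucNorm v = ‖WithLp.toLp 2 v‖ := by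
  simp [eucNorm, EuclideanSpace.norm_eq]

lemma eucNorm_nonneg (v : Fin n → ℝ) : 0 ≤ eucNorm v := Real.sqrt_nonneg _

lemma dotProduct_le_eucNorm_mul_eucNorm (a v : Fin n → ℝ) : a ⬝ᵥ v ≤ eucNorm a * eucNorm v := by
  rw [eucNorm_eq_norm, eucNorm_eq_norm, dotProduct_comm]
  exact real_inner_le_norm (WithLp.toLp 2 a) (WithLp.toLp 2 v)

lemma eucNorm_smul (r : ℝ) (v : Fin n → ℝ) : eucNorm (r • v) = |r| * eucNorm v := by
  rw [eucNorm_eq_norm, eucNorm_eq_norm, WithLp.toLp_smul, norm_smul, Real.norm_eq_abs]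

lemma eucNorm_eq_zero {v : Fin n → ℝ} : eucNorm v = 0 ↔ v = 0 := by
  rw [eucNorm_eq_norm, norm_eq_zero, WithLp.toLp_eq_zero]

end EuclideanNorm

section Rayleigh

variable {n p : ℕ}

lemma bddAbove_rayleigh (M : Matrix (Fin n) (Fin n) ℝ) :
    BddAbove {r : ℝ | ∃ v : Fin n → ℝ, eucNorm v = 1 ∧ r = v ⬝ᵥ M *ᵥ v} := by
  refine ⟨‖Matrix.toEuclideanCLM (𝕜 := ℝ) M‖, ?_⟩
  rintro r ⟨v, hv, rfl⟩
  calc v ⬝ᵥ M *ᵥ v ≤ eucNorm v * eucNorm (M *ᵥ v) := dotProduct_le_eucNorm_mul_eucNorm _ _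
    _ = ‖Matrix.toEuclideanCLM (𝕜 := ℝ) M (WithLp.toLp 2 v)‖ := by
      rw [hv, one_mul, eucNorm_eq_norm, Matrix.toEuclideanCLM_toLp]
    _ ≤ ‖Matrix.toEuclideanCLM (𝕜 := ℝ) M‖ * ‖WithLp.toLp 2 v‖ :=
      ContinuousLinearMap.le_opNorm _ _
    _ = ‖Matrix.toEuclideanCLM (𝕜 := ℝ) M‖ := by rw [← eucNorm_eq_norm, hv, mul_one]

lemma dotProduct_mulVec_le_lamMax_mul (M : Matrix (Fin n) (Fin n) ℝ) (v : Fin n → ℝ) :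
    v ⬝ᵥ M *ᵥ v ≤ lamMax M * eucNorm v ^ 2 := by
  rcases eq_or_ne v 0 with rfl | hv
  · simp [eucNorm]
  have hpos : 0 < eucNorm v := (eucNorm_nonneg v).lt_of_ne' (mt eucNorm_eq_zero.mp hv)
  set u := (eucNorm v)⁻¹ • v
  have hu : eucNorm u = 1 := by
    rw [eucNorm_smul, abs_of_pos (inv_pos.2 hpos), inv_mul_cancel₀ hpos.ne']
  have hvu : v = eucNorm v • u := by rw [smul_smul, mul_inv_cancel₀ hpos.ne', one_smul]
  have hle : u ⬝ᵥ M *ᵥ u ≤ lamMax M := le_csSup (bddAbove_rayleigh M) ⟨u, hu, rfl⟩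
  calc v ⬝ᵥ M *ᵥ v = eucNorm v ^ 2 * (u ⬝ᵥ M *ᵥ u) := by
        rw [hvu, mulVec_smul, smul_dotProduct, dotProduct_smul, smul_eq_mul, smul_eq_mul, ← hvu]
        ring
    _ ≤ lamMax M * eucNorm v ^ 2 := by
        rw [mul_comm]
        exact mul_le_mul_of_nonneg_right hle (sq_nonneg _)

lemma eucNorm_mulVec_sq (M : Matrix (Fin p) (Fin n) ℝ) (v : Fin n → ℝ) :
    eucNorm (M *ᵥ v) ^ 2 = v ⬝ᵥ (Mᵀ * M) *ᵥ v := by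
  rw [eucNorm, Real.sq_sqrt (Finset.sum_nonneg fun i _ => sq_nonneg _), ← mulVec_mulVec,
    dotProduct_mulVec, vecMul_transpose]
  simp only [dotProduct, sq]

lemma eucNorm_mulVec_le (M : Matrix (Fin p) (Fin n) ℝ) (v : Fin n → ℝ) :
    eucNorm (M *ᵥ v) ≤ specNorm M * eucNorm v := by
  calc eucNorm (M *ᵥ v) = √(eucNorm (M *ᵥ v) ^ 2) := (Real.sqrt_sq (eucNorm_nonneg _)).symm
    _ ≤ √(lamMax (Mᵀ * M) * eucNorm v ^ 2) :=
      Real.sqrt_le_sqrt ((eucNorm_mulVec_sq M v).trans_le (dotProduct_mulVec_le_lamMax_mul _ v))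
    _ = specNorm M * eucNorm v := by
      rw [Real.sqrt_mul' _ (sq_nonneg _), Real.sqrt_sq (eucNorm_nonneg v), specNorm]

end Rayleigh

namespace Policy

variable {n m T : ℕ} {A : Matrix (Fin n) (Fin n) ℝ} {B : Matrix (Fin n) (Fin m) ℝ}

lemma mean_sub_mean (C : Policy n m T A B) (mu0 mu0' : Fin n → ℝ) (k : ℕ) :
    C.mean mu0 k - C.mean mu0' k = C.clProd k *ᵥ (mu0 - mu0') := by
  induction k with
  | zero => simp [mean, clProd]
  | succ k ih =>
    rw [mean, mean, clProd, ← mulVec_mulVec, ← ih, add_mulVec]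
    simp only [← mulVec_mulVec, mulVec_sub]
    abel

lemma eucNorm_mean_sub_mean_le (C : Policy n m T A B) (mu0 mu0' : Fin n → ℝ) (k : ℕ) :
    eucNorm (C.mean mu0 k - C.mean mu0' k) ≤ specNorm (C.clProd k) * eucNorm (mu0 - mu0') := by
  rw [mean_sub_mean]
  exact eucNorm_mulVec_le _ _

lemma dotProduct_mean_le (C : Policy n m T A B) (a mu0 mu0' : Fin n → ℝ) (k : ℕ) :
    a ⬝ᵥ C.mean mu0 k
      ≤ a ⬝ᵥ C.mean mu0' k + eucNorm a * specNorm (C.clProd k) * eucNorm (mu0 - mu0') := by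
  have h := (dotProduct_le_eucNorm_mul_eucNorm a (C.mean mu0 k - C.mean mu0' k)).trans
    (mul_le_mul_of_nonneg_left (C.eucNorm_mean_sub_mean_le mu0 mu0' k) (eucNorm_nonneg a))
  rw [dotProduct_sub, ← mul_assoc] at h
  linarith

end Policy

theorem slack_perturbation_robustness_general (n m T I : ℕ)
    (c : ℝ)
    (A : Matrix (Fin n) (Fin n) ℝ) (B : Matrix (Fin n) (Fin m) ℝ)
    (D : Matrix (Fin n) (Fin n) ℝ)
    (ax : Fin I → Fin n → ℝ) (bx : Fin I → ℝ)
    (muG : Fin n → ℝ) (rG : ℝ)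
    (C : Policy n m T A B) (mu0' : Fin n → ℝ)
    (Sig0 : Matrix (Fin n) (Fin n) ℝ)
    (δc δf δ0 : ℝ)
    -- (i) the state constraints hold with slack δ_c along the nominal trajectory:
    (hstate : ∀ i : Fin I, ∀ k ≤ T,
      ax i ⬝ᵥ C.mean mu0' k
        + c * Real.sqrt (ax i ⬝ᵥ (C.cov D Sig0 k).mulVec (ax i)) + δc ≤ bx i)
    -- (ii) the terminal covariance has slack δ_f:
    (hterm : c * Real.sqrt (lamMax (C.cov D Sig0 T)) + δf ≤ rG)
    -- (iii) the nominal terminal mean is μ_G: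
    (hmuT : C.mean mu0' T = muG)
    -- (iv) δ₀ is compatible with the slacks:
    (hδ0c : ∀ i : Fin I, ∀ k ≤ T, eucNorm (ax i) * specNorm (C.clProd k) * δ0 ≤ δc)
    (hδ0f : specNorm (C.clProd T) * δ0 ≤ δf) :
    ∀ mu0 : Fin n → ℝ, eucNorm (mu0 - mu0') ≤ δ0 →
      (∀ i : Fin I, ∀ k ≤ T,
        ax i ⬝ᵥ C.mean mu0 k
          + c * Real.sqrt (ax i ⬝ᵥ (C.cov D Sig0 k).mulVec (ax i)) ≤ bx i) ∧
      eucNorm (C.mean mu0 T - muG) + c * Real.sqrt (lamMax (C.cov D Sig0 T)) ≤ rG := by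
  intro mu0 hmu0
  refine ⟨fun i k hk => ?_, ?_⟩
  · have hshift : eucNorm (ax i) * specNorm (C.clProd k) * eucNorm (mu0 - mu0') ≤ δc :=
      (mul_le_mul_of_nonneg_left hmu0
        (mul_nonneg (eucNorm_nonneg _) (Real.sqrt_nonneg _))).trans (hδ0c i k hk)
    linarith [C.dotProduct_mean_le (ax i) mu0 mu0' k, hstate i k hk]
  · have hdev : eucNorm (C.mean mu0 T - C.mean mu0' T) ≤ δf :=
      (C.eucNorm_mean_sub_mean_le mu0 mu0' T).trans
        ((mul_le_mul_of_nonneg_left hmu0 (Real.sqrt_nonneg _)).trans hδ0f)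
    rw [← hmuT]
    linarith

/-- Slack-based perturbation robustness. -/
theorem slack_perturbation_robustness (n m T I : ℕ) (hn : 1 ≤ n) (hm : 1 ≤ m) (hT : 1 ≤ T)
    (c : ℝ) (hc : 0 < c)
    (A : Matrix (Fin n) (Fin n) ℝ) (B : Matrix (Fin n) (Fin m) ℝ)
    (D : Matrix (Fin n) (Fin n) ℝ)
    (ax : Fin I → Fin n → ℝ) (bx : Fin I → ℝ)
    (muG : Fin n → ℝ) (rG : ℝ) (hrG : 0 ≤ rG)
    (C : Policy n m T A B) (mu0' : Fin n → ℝ) (hx0 : C.xbar 0 = mu0')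
    (Sig0 : Matrix (Fin n) (Fin n) ℝ) (hSig0 : Sig0.PosSemidef)
    (δc δf δ0 : ℝ) (hδc : 0 < δc) (hδf : 0 < δf) (hδ0 : 0 < δ0)
    -- (i) the state constraints hold with slack δ_c along the nominal trajectory:
    (hstate : ∀ i : Fin I, ∀ k ≤ T,
      ax i ⬝ᵥ C.mean mu0' k
        + c * Real.sqrt (ax i ⬝ᵥ (C.cov D Sig0 k).mulVec (ax i)) + δc ≤ bx i)
    -- (ii) the terminal covariance has slack δ_f:
    (hterm : c * Real.sqrt (lamMax (C.cov D Sig0 T)) + δf ≤ rG)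
    -- (iii) the nominal terminal mean is μ_G:
    (hmuT : C.mean mu0' T = muG)
    -- (iv) δ₀ is compatible with the slacks:
    (hδ0c : ∀ i : Fin I, ∀ k ≤ T, eucNorm (ax i) * specNorm (C.clProd k) * δ0 ≤ δc)
    (hδ0f : specNorm (C.clProd T) * δ0 ≤ δf) :
    ∀ mu0 : Fin n → ℝ, eucNorm (mu0 - mu0') ≤ δ0 →
      (∀ i : Fin I, ∀ k ≤ T,
        ax i ⬝ᵥ C.mean mu0 k
          + c * Real.sqrt (ax i ⬝ᵥ (C.cov D Sig0 k).mulVec (ax i)) ≤ bx i) ∧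
      eucNorm (C.mean mu0 T - muG) + c * Real.sqrt (lamMax (C.cov D Sig0 T)) ≤ rG :=
  slack_perturbation_robustness_general n m T I c A B D ax bx muG rG C mu0' Sig0 δc δf δ0 hstate
    hterm hmuT hδ0c hδ0f
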